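/- Let Λ, β, α, μ₁, μ₂, d₁, d₂ > 0, θ ∈ ℝ, S₀ = Λ/μ₁, and assume βS₀/μ₂ > 1. Let (S*, I*) be the positive endemic equilibrium. Suppose c ∈ ℝ and S, I : ℝ → ℝ are differentiable, solve the traveling-wave system cS'(ξ) = d₁𝔍[S](ξ) + Λ − βS(ξ)I(ξ)/(1 + αI(ξ)) − μ₁S(ξ), cI'(ξ) = d₂𝔍[I](ξ) + βS(ξ)I(ξ)/(1 + αI(ξ)) − μ₂I(ξ), satisfy S(ξ) > 0 and I(ξ) > 0 for all ξ, I is integrable on (−∞, 0], and (S(ξ), I(ξ)) → (S₀, 0) as ξ → −∞ and (S(ξ), I(ξ)) → (S*, I*) as ξ → +∞. Then c > 0. -/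

import Mathlib

/-!
Suppose `c ≤ 0`. Since `S → S₀` and `β S₀ > μ₂`, the incidence term dominates near `-∞`:
`g := β S I / (1 + α I) - μ₂ I ≥ ε I` on some `(-∞, M]`. Let `F' = I` with `F(-∞) = 0` and
`P' = F`. Integrating the `I`-equation from `-∞` gives `ε F ≤ c I - d₂ 𝔍[F]` on `(-∞, M]`, and
integrating once more from `a` to `M`,
`ε (P M - P a) ≤ c (F M - F a) - d₂ (𝔍[P] M - 𝔍[P] a)`.
Here `c F M ≤ 0`, and `𝔍[P] M ≥ 0` because `P` is convex (`F` increases), while `F a` and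
`𝔍[P] a` vanish as `a → -∞` (the increments of `P` over bounded steps do, as `P' = F → 0`).
Hence `ε (P M - P (M - 1)) ≤ 0`, contradicting `F > 0`.
-/

open MeasureTheory Set Filter Topology

/-- Discrete Laplacian in direction `θ`. -/
noncomputable def lap (θ : ℝ) (φ : ℝ → ℝ) (ξ : ℝ) : ℝ :=
  φ (ξ + Real.sin θ) + φ (ξ - Real.sin θ) + φ (ξ + Real.cos θ) + φ (ξ - Real.cos θ) - 4 * φ ξ

lemma MonotoneOn.le_of_tendsto_atBot {α β : Type*} [TopologicalSpace α] [Preorder α]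
    [OrderClosedTopology α] [LinearOrder β] {f : β → α} {M : β} {a : α}
    (hf : MonotoneOn f (Iic M)) (ha : Tendsto f atBot (𝓝 a)) {x : β} (hx : x ≤ M) :
    a ≤ f x :=
  haveI : Nonempty β := ⟨x⟩
  le_of_tendsto ha <| (eventually_le_atBot x).mono fun _ hy ↦ hf (hy.trans hx) hx hy

lemma monotoneOn_Iic_of_hasDerivAt_nonneg {f f' : ℝ → ℝ} {M : ℝ}
    (hf : ∀ x, HasDerivAt f (f' x) x) (hf' : ∀ x ≤ M, 0 ≤ f' x) : MonotoneOn f (Iic M) :=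
  monotoneOn_of_hasDerivWithinAt_nonneg (convex_Iic M)
    (fun x _ ↦ (hf x).continuousAt.continuousWithinAt) (fun x _ ↦ (hf x).hasDerivWithinAt)
    fun x hx ↦ hf' x (interior_subset (s := Iic M) hx)

lemma exists_hasDerivAt_tendsto_atBot_zero {f : ℝ → ℝ} (hf : Continuous f)
    (hint : IntegrableOn f (Iic 0)) :
    ∃ F : ℝ → ℝ, (∀ x, HasDerivAt F (f x) x) ∧ Tendsto F atBot (𝓝 0) := by
  refine ⟨fun x ↦ (∫ t in Iic 0, f t) + ∫ t in 0..x, f t,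
    fun x ↦ (hf.integral_hasStrictDerivAt 0 x).hasDerivAt.const_add _, ?_⟩
  have := (intervalIntegral_tendsto_integral_Iic 0 hint tendsto_id).const_sub (∫ t in Iic 0, f t)
  rw [sub_self] at this
  exact this.congr fun x ↦ by rw [id, intervalIntegral.integral_symm x 0]; ring

lemma tendsto_comp_add_sub_atBot_of_hasDerivAt {Φ φ : ℝ → ℝ}
    (hΦ : ∀ x, HasDerivAt Φ (φ x) x) (hφ : Tendsto φ atBot (𝓝 0)) (r : ℝ) :
    Tendsto (fun ξ ↦ Φ (ξ + r) - Φ ξ) atBot (𝓝 0) := by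
  rw [Metric.tendsto_nhds]
  intro δ hδ
  have hη : 0 < δ / (|r| + 1) := by positivity
  obtain ⟨B, hB⟩ := eventually_atBot.1 (hφ.norm.eventually (gt_mem_nhds (by simpa using hη)))
  filter_upwards [eventually_le_atBot (B - |r|)] with ξ hξ
  have hmem : ∀ t, |t| ≤ |r| → ξ + t ∈ Iic B := fun t ht ↦ by
    simp only [mem_Iic]; linarith [le_abs_self t]
  have hmvt := (convex_Iic B).norm_image_sub_le_of_norm_hasDerivWithin_le
    (fun x _ ↦ (hΦ x).hasDerivWithinAt) (fun x hx ↦ (hB x hx).le)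
    (hmem 0 (by simp)) (hmem r le_rfl)
  rw [add_zero, add_sub_cancel_left, Real.norm_eq_abs] at hmvt
  rw [Real.dist_eq, sub_zero]
  calc |Φ (ξ + r) - Φ ξ| ≤ δ / (|r| + 1) * |r| := hmvt
    _ < δ := by
      rw [div_mul_eq_mul_div, div_lt_iff₀ (by positivity)]
      nlinarith [abs_nonneg r]

lemma ConvexOn.two_mul_le_add {f : ℝ → ℝ} (hf : ConvexOn ℝ univ f) (x r : ℝ) :
    2 * f x ≤ f (x + r) + f (x - r) := by
  have := hf.2 (mem_univ (x + r)) (mem_univ (x - r)) (by norm_num : (0 : ℝ) ≤ 1 / 2)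
    (by norm_num : (0 : ℝ) ≤ 1 / 2) (by norm_num)
  rw [show (1 / 2 : ℝ) • (x + r) + (1 / 2 : ℝ) • (x - r) = x by simp only [smul_eq_mul]; ring,
    smul_eq_mul, smul_eq_mul] at this
  linarith

section Lap

variable {θ : ℝ}

lemma lap_eq_sum_sub (θ : ℝ) (φ : ℝ → ℝ) (ξ : ℝ) :
    lap θ φ ξ = (φ (ξ + Real.sin θ) - φ ξ) + (φ (ξ + -Real.sin θ) - φ ξ)
      + (φ (ξ + Real.cos θ) - φ ξ) + (φ (ξ + -Real.cos θ) - φ ξ) := by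
  simp only [lap, ← sub_eq_add_neg]
  ring

lemma hasDerivAt_lap {Φ φ : ℝ → ℝ} (hΦ : ∀ x, HasDerivAt Φ (φ x) x) (ξ : ℝ) :
    HasDerivAt (lap θ Φ) (lap θ φ ξ) ξ :=
  (((((hΦ _).comp_add_const ξ _).add ((hΦ _).comp_sub_const ξ _)).add
    ((hΦ _).comp_add_const ξ _)).add ((hΦ _).comp_sub_const ξ _)).sub ((hΦ ξ).const_mul 4)

lemma tendsto_lap_atBot_of_tendsto_sub {φ : ℝ → ℝ}
    (hφ : ∀ r, Tendsto (fun ξ ↦ φ (ξ + r) - φ ξ) atBot (𝓝 0)) :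
    Tendsto (lap θ φ) atBot (𝓝 0) := by
  have := (((hφ (Real.sin θ)).add (hφ (-Real.sin θ))).add (hφ (Real.cos θ))).add (hφ (-Real.cos θ))
  simp only [add_zero] at this
  exact this.congr fun ξ ↦ (lap_eq_sum_sub θ φ ξ).symm

lemma tendsto_lap_atBot {φ : ℝ → ℝ} {L : ℝ} (hφ : Tendsto φ atBot (𝓝 L)) :
    Tendsto (lap θ φ) atBot (𝓝 0) :=
  tendsto_lap_atBot_of_tendsto_sub fun r ↦ by
    simpa using (hφ.comp (tendsto_atBot_add_const_right _ r tendsto_id)).sub hφ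

lemma lap_nonneg_of_convexOn {Φ : ℝ → ℝ} (hΦ : ConvexOn ℝ univ Φ) (ξ : ℝ) : 0 ≤ lap θ Φ ξ := by
  have hsin := hΦ.two_mul_le_add ξ (Real.sin θ)
  have hcos := hΦ.two_mul_le_add ξ (Real.cos θ)
  unfold lap
  linarith

end Lap

section TravelingWave

variable {θ c d ε : ℝ} {I g : ℝ → ℝ}

lemma mul_le_sub_lap_of_reaction_ge {M : ℝ} {F : ℝ → ℝ} (hI : Differentiable ℝ I)
    (hF : ∀ x, HasDerivAt F (I x) x) (hFlim : Tendsto F atBot (𝓝 0))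
    (hIlim : Tendsto I atBot (𝓝 0)) (hIeq : ∀ ξ, c * deriv I ξ = d * lap θ I ξ + g ξ)
    (hg : ∀ ξ ≤ M, ε * I ξ ≤ g ξ) {x : ℝ} (hx : x ≤ M) :
    ε * F x ≤ c * I x - d * lap θ F x := by
  have hW : MonotoneOn (fun x ↦ c * I x - d * lap θ F x - ε * F x) (Iic M) :=
    monotoneOn_Iic_of_hasDerivAt_nonneg (fun x ↦ (((hI x).hasDerivAt.const_mul c).sub
      ((hasDerivAt_lap hF x).const_mul d)).sub ((hF x).const_mul ε))
      fun x hx ↦ by linarith [hIeq x, hg x hx]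
  have hWlim : Tendsto (fun x ↦ c * I x - d * lap θ F x - ε * F x) atBot (𝓝 0) := by
    simpa using ((hIlim.const_mul c).sub ((tendsto_lap_atBot hFlim).const_mul d)).sub
      (hFlim.const_mul ε)
  linarith [hW.le_of_tendsto_atBot hWlim hx]

theorem wave_speed_pos_of_reaction_ge (hd : 0 ≤ d) (hε : 0 < ε) (hI : Differentiable ℝ I)
    (hIpos : ∀ ξ, 0 < I ξ) (hIint : IntegrableOn I (Iic 0)) (hIlim : Tendsto I atBot (𝓝 0))
    (hIeq : ∀ ξ, c * deriv I ξ = d * lap θ I ξ + g ξ) (hg : ∀ᶠ ξ in atBot, ε * I ξ ≤ g ξ) :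
    0 < c := by
  by_contra! hc
  obtain ⟨M, hM⟩ := eventually_atBot.1 hg
  obtain ⟨F, hF, hFlim⟩ := exists_hasDerivAt_tendsto_atBot_zero hI.continuous hIint
  have hFmono : StrictMono F := strictMono_of_hasDerivAt_pos hF hIpos
  have hFpos (x : ℝ) : 0 < F x :=
    (hFmono.monotone.le_of_tendsto hFlim (x - 1)).trans_lt (hFmono (by linarith))
  have hFcont : Continuous F := continuous_iff_continuousAt.2 fun x ↦ (hF x).continuousAt
  set P : ℝ → ℝ := fun x ↦ ∫ t in 0..x, F t
  have hP (x : ℝ) : HasDerivAt P (F x) x := (hFcont.integral_hasStrictDerivAt 0 x).hasDerivAt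
  have hPconvex : ConvexOn ℝ univ P := Monotone.convexOn_univ_of_deriv
    (fun x ↦ (hP x).differentiableAt) ((funext fun x ↦ (hP x).deriv) ▸ hFmono.monotone)
  have hV : MonotoneOn (fun x ↦ c * F x - d * lap θ P x - ε * P x) (Iic M) :=
    monotoneOn_Iic_of_hasDerivAt_nonneg (fun x ↦ (((hF x).const_mul c).sub
      ((hasDerivAt_lap hP x).const_mul d)).sub ((hP x).const_mul ε)) fun x hx ↦ by
      linarith [mul_le_sub_lap_of_reaction_ge hI hF hFlim hIlim hIeq hM hx]
  have hU : Tendsto (fun x ↦ c * F x - d * lap θ P x) atBot (𝓝 0) := by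
    simpa using (hFlim.const_mul c).sub ((tendsto_lap_atBot_of_tendsto_sub
      (tendsto_comp_add_sub_atBot_of_hasDerivAt hP hFlim)).const_mul d)
  have hbound : 0 ≤ c * F M - d * lap θ P M - ε * (P M - P (M - 1)) := by
    refine le_of_tendsto hU ?_
    filter_upwards [eventually_le_atBot (M - 1)] with a ha
    have hVa := hV (ha.trans (by linarith)) self_mem_Iic (ha.trans (by linarith))
    have hPa := mul_le_mul_of_nonneg_left
      ((strictMono_of_hasDerivAt_pos hP hFpos).monotone ha) hε.le
    simp only at hVa
    linarith
  have hPinc : 0 < ε * (P M - P (M - 1)) :=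
    mul_pos hε (sub_pos.2 (strictMono_of_hasDerivAt_pos hP hFpos (by linarith)))
  nlinarith [mul_nonpos_of_nonpos_of_nonneg hc (hFpos M).le,
    mul_nonneg hd (lap_nonneg_of_convexOn (θ := θ) hPconvex M)]

end TravelingWave

theorem stmt_17_general (β α μ₂ d₂ θ c : ℝ)
    (hμ₂ : 0 < μ₂)
    (hd₂ : 0 < d₂)
    (S₀ : ℝ) (hR₀ : 1 < β * S₀ / μ₂)
    (S I : ℝ → ℝ)
    (hIdiff : Differentiable ℝ I)
    (hIpos : ∀ ξ : ℝ, 0 < I ξ)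
    (hIint : MeasureTheory.IntegrableOn I (Set.Iic 0))
    (hIeq : ∀ ξ : ℝ, c * deriv I ξ =
      d₂ * lap θ I ξ + β * S ξ * I ξ / (1 + α * I ξ) - μ₂ * I ξ)
    (hSlimBot : Filter.Tendsto S Filter.atBot (nhds S₀))
    (hIlimBot : Filter.Tendsto I Filter.atBot (nhds 0)) :
    0 < c := by
  have hgap : μ₂ < β * S₀ := (one_lt_div hμ₂).1 hR₀
  have hrate : Tendsto (fun ξ ↦ β * S ξ / (1 + α * I ξ) - μ₂) atBot (𝓝 (β * S₀ - μ₂)) := by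
    simpa using ((hSlimBot.const_mul β).div ((hIlimBot.const_mul α).const_add 1)
      (by norm_num)).sub_const μ₂
  refine wave_speed_pos_of_reaction_ge (ε := (β * S₀ - μ₂) / 2)
    (g := fun ξ ↦ β * S ξ * I ξ / (1 + α * I ξ) - μ₂ * I ξ) hd₂.le (by linarith) hIdiff hIpos
    hIint hIlimBot (fun ξ ↦ by rw [hIeq]; ring) ?_
  filter_upwards [hrate.eventually (eventually_ge_nhds (half_lt_self (sub_pos.2 hgap)))] with ξ hξ
  calc (β * S₀ - μ₂) / 2 * I ξ ≤ I ξ * (β * S ξ / (1 + α * I ξ) - μ₂) := by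
        rw [mul_comm]; exact mul_le_mul_of_nonneg_left hξ (hIpos ξ).le
    _ = β * S ξ * I ξ / (1 + α * I ξ) - μ₂ * I ξ := by ring

theorem stmt_17 (Λ β α μ₁ μ₂ d₁ d₂ θ c : ℝ)
    (hΛ : 0 < Λ) (hβ : 0 < β) (hα : 0 < α) (hμ₁ : 0 < μ₁) (hμ₂ : 0 < μ₂)
    (hd₁ : 0 < d₁) (hd₂ : 0 < d₂)
    (S₀ : ℝ) (hS₀ : S₀ = Λ / μ₁) (hR₀ : 1 < β * S₀ / μ₂)
    (Sstar Istar : ℝ) (hSstar : 0 < Sstar) (hIstar : 0 < Istar)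
    (heq1 : Λ = β * Sstar * Istar / (1 + α * Istar) + μ₁ * Sstar)
    (heq2 : β * Sstar * Istar / (1 + α * Istar) = μ₂ * Istar)
    (S I : ℝ → ℝ)
    (hSdiff : Differentiable ℝ S) (hIdiff : Differentiable ℝ I)
    (hSpos : ∀ ξ : ℝ, 0 < S ξ) (hIpos : ∀ ξ : ℝ, 0 < I ξ)
    (hIint : MeasureTheory.IntegrableOn I (Set.Iic 0))
    (hSeq : ∀ ξ : ℝ, c * deriv S ξ =
      d₁ * lap θ S ξ + Λ - β * S ξ * I ξ / (1 + α * I ξ) - μ₁ * S ξ)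
    (hIeq : ∀ ξ : ℝ, c * deriv I ξ =
      d₂ * lap θ I ξ + β * S ξ * I ξ / (1 + α * I ξ) - μ₂ * I ξ)
    (hSlimBot : Filter.Tendsto S Filter.atBot (nhds S₀))
    (hIlimBot : Filter.Tendsto I Filter.atBot (nhds 0))
    (hSlimTop : Filter.Tendsto S Filter.atTop (nhds Sstar))
    (hIlimTop : Filter.Tendsto I Filter.atTop (nhds Istar)) :
    0 < c :=
  stmt_17_general β α μ₂ d₂ θ c hμ₂ hd₂ S₀ hR₀ S I hIdiff hIpos hIint hIeq hSlimBot hIlimBot
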